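/- arXiv:2506.18065 — 2 statements merged into one kernel-verified Lean document; each statement's English description precedes it below -/
import Mathlib

section
/- Fix an even positive integer d and A ≥ 1. For H ≥ 3, let Ĥ = H(log H)^{−A} and let S(H) = { c ∈ ℤ^{d+1} : |c_i| ≤ H for all i, and c₀·c_d ≠ 0 }. Let b⁺(c) = max{ g_c(u,v) : max(|u|,|v|) = 1 } where g_c(u,v) = Σ_i c_i u^{d−i} v^{i}. Then #{ c ∈ S(H) : 0 < b⁺(c) ≤ Ĥ } = O(Ĥ · H^d). -/
/-- The maximum of the binary form `g_c` on the boundary of the square `[-1,1]²`. -/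
noncomputable def bplusForm (d : ℕ) (c : Fin (d + 1) → ℝ) : ℝ :=
  sSup {y : ℝ | ∃ u v : ℝ, max |u| |v| = 1 ∧
    y = ∑ i : Fin (d + 1), c i * u ^ (d - (i : ℕ)) * v ^ (i : ℕ)}

namespace Stmt7

/-- The binary form. -/
def gform (d : ℕ) (c : Fin (d + 1) → ℝ) (u v : ℝ) : ℝ :=
  ∑ i : Fin (d + 1), c i * u ^ (d - (i : ℕ)) * v ^ (i : ℕ)

/-- The set of values of the form on the boundary of the square. -/
def bset (d : ℕ) (c : Fin (d + 1) → ℝ) : Set ℝ :=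
  {y : ℝ | ∃ u v : ℝ, max |u| |v| = 1 ∧ y = gform d c u v}

/-- Abbreviation for the sup. -/
noncomputable def bp (d : ℕ) (c : Fin (d+1) → ℝ) : ℝ := sSup (bset d c)

lemma bp_eq_bplusForm (d : ℕ) (c : Fin (d+1) → ℝ) : bp d c = bplusForm d c := rfl

/-- The indicator of the first and last coordinates. -/
def ev (d : ℕ) : Fin (d+1) → ℝ :=
  fun i => (if i = 0 then 1 else 0) + (if i = Fin.last d then 1 else 0)

lemma bset_nonempty (d : ℕ) (c : Fin (d+1) → ℝ) : (bset d c).Nonempty :=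
  ⟨gform d c 1 1, 1, 1, by norm_num, rfl⟩

lemma bset_bddAbove (d : ℕ) (c : Fin (d+1) → ℝ) : BddAbove (bset d c) := by
  refine ⟨∑ i : Fin (d+1), |c i|, ?_⟩
  rintro y ⟨u, v, huv, rfl⟩
  have hu : |u| ≤ 1 := huv ▸ le_max_left _ _
  have hv : |v| ≤ 1 := huv ▸ le_max_right _ _
  refine Finset.sum_le_sum fun i _ => ?_
  calc c i * u ^ (d - (i:ℕ)) * v ^ (i:ℕ) ≤ |c i * u ^ (d - (i:ℕ)) * v ^ (i:ℕ)| := le_abs_self _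
  _ = |c i| * |u| ^ (d - (i:ℕ)) * |v| ^ (i:ℕ) := by rw [abs_mul, abs_mul, abs_pow, abs_pow]
  _ ≤ |c i| * |u| ^ (d - (i:ℕ)) :=
      mul_le_of_le_one_right (mul_nonneg (abs_nonneg _) (pow_nonneg (abs_nonneg _) _))
        (pow_le_one₀ (abs_nonneg _) hv)
  _ ≤ |c i| := mul_le_of_le_one_right (abs_nonneg _) (pow_le_one₀ (abs_nonneg _) hu)

lemma gform_add (d : ℕ) (c : Fin (d+1) → ℝ) (u v : ℝ) :
    gform d (fun i => c i + ev d i) u v = gform d c u v + u ^ d + v ^ d := by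
  unfold gform ev
  have expand : ∀ i : Fin (d+1),
      (c i + ((if i = 0 then (1:ℝ) else 0) + (if i = Fin.last d then 1 else 0)))
          * u ^ (d-(i:ℕ)) * v^(i:ℕ)
      = c i * u^(d-(i:ℕ)) * v^(i:ℕ)
        + ((if i = 0 then u^(d-(i:ℕ)) * v^(i:ℕ) else 0)
        + (if i = Fin.last d then u^(d-(i:ℕ)) * v^(i:ℕ) else 0)) := by
    intro i; split_ifs <;> ring
  rw [Finset.sum_congr rfl (fun i _ => expand i), Finset.sum_add_distrib,
    Finset.sum_add_distrib, Finset.sum_ite_eq' Finset.univ (0 : Fin (d+1)),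
    Finset.sum_ite_eq' Finset.univ (Fin.last d)]
  simp [Fin.val_last]
  ring

lemma one_le_pow_add (d : ℕ) (hd : Even d) {u v : ℝ} (h : max |u| |v| = 1) :
    1 ≤ u ^ d + v ^ d := by
  have hu0 : (0:ℝ) ≤ u ^ d := hd.pow_nonneg u
  have hv0 : (0:ℝ) ≤ v ^ d := hd.pow_nonneg v
  rcases max_cases |u| |v| with ⟨h1, _⟩ | ⟨h1, _⟩
  · have : u ^ d = 1 := by rw [← hd.pow_abs, h1.symm.trans h, one_pow]
    linarith
  · have : v ^ d = 1 := by rw [← hd.pow_abs, h1.symm.trans h, one_pow]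
    linarith

lemma step (d : ℕ) (hd : Even d) (c : Fin (d+1) → ℝ) :
    bp d c + 1 ≤ bp d (fun i => c i + ev d i) := by
  have key : bp d c ≤ bp d (fun i => c i + ev d i) - 1 := by
    refine csSup_le (bset_nonempty d c) ?_
    rintro y ⟨u, v, huv, rfl⟩
    have hmem : gform d (fun i => c i + ev d i) u v ∈ bset d (fun i => c i + ev d i) :=
      ⟨u, v, huv, rfl⟩
    have hle := le_csSup (bset_bddAbove d (fun i => c i + ev d i)) hmem
    rw [gform_add d c u v] at hle
    have := one_le_pow_add d hd huv
    unfold bp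
    linarith
  linarith

lemma iter (d : ℕ) (hd : Even d) (c : Fin (d+1) → ℝ) (k : ℕ) :
    bp d c + k ≤ bp d (fun i => c i + k * ev d i) := by
  induction k with
  | zero => simp
  | succ n ih =>
    have h2 := step d hd (fun i => c i + n * ev d i)
    have heq : (fun i => (c i + n * ev d i) + ev d i)
         = fun i => c i + ((n:ℕ)+1 : ℕ) * ev d i := by
      funext i; push_cast; ring
    rw [heq] at h2
    push_cast at h2
    push_cast
    push_cast at ih
    linarith

lemma ceil_lt (d : ℕ) (hd : Even d) (hd0 : 0 < d) (c c' : Fin (d+1) → ℤ)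
    (hmid : ∀ j : Fin d, c j.succ - (if j.succ = Fin.last d then c 0 else 0)
                       = c' j.succ - (if j.succ = Fin.last d then c' 0 else 0))
    (hlt : c 0 < c' 0) :
    ⌈bp d (fun i => (c i : ℝ))⌉ < ⌈bp d (fun i => (c' i : ℝ))⌉ := by
  set k : ℤ := c' 0 - c 0 with hk
  have hkpos : 0 < k := by omega
  have h0ne : (0 : Fin (d+1)) ≠ Fin.last d := by
    intro h
    have := congrArg Fin.val h
    simp [Fin.val_last] at this
    omega
  have hkt : ((k.toNat : ℕ) : ℝ) = (k : ℝ) := by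
    exact_mod_cast congrArg (fun z : ℤ => (z : ℝ)) (Int.toNat_of_nonneg hkpos.le)
  have hfun : (fun i => ((c' i : ℝ))) = fun i => (c i : ℝ) + (k.toNat : ℕ) * ev d i := by
    funext i
    rw [hkt]
    induction i using Fin.cases with
    | zero =>
      simp only [ev, if_pos rfl, if_neg h0ne]
      rw [hk]; push_cast; ring
    | succ j =>
      by_cases h : j.succ = Fin.last d
      · have hlast := hmid j
        rw [if_pos h, if_pos h] at hlast
        have hcc : c' j.succ = c j.succ + k := by rw [hk]; omega
        simp only [ev, if_neg (Fin.succ_ne_zero j), if_pos h]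
        rw [hcc]; push_cast; ring
      · have hmj := hmid j
        rw [if_neg h, if_neg h] at hmj
        simp only [sub_zero] at hmj
        simp [ev, if_neg (Fin.succ_ne_zero j), if_neg h, hmj]
  have hiter := iter d hd (fun i => (c i : ℝ)) k.toNat
  rw [← hfun, hkt] at hiter
  have h1 : ⌈bp d (fun i => (c i : ℝ)) + (k:ℝ)⌉ ≤ ⌈bp d (fun i => (c' i : ℝ))⌉ :=
    Int.ceil_le_ceil hiter
  rw [Int.ceil_add_intCast] at h1
  omega

lemma inj_aux (d : ℕ) (hd : Even d) (hd0 : 0 < d) (c c' : Fin (d+1) → ℤ)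
    (hmid : ∀ j : Fin d, c j.succ - (if j.succ = Fin.last d then c 0 else 0)
                       = c' j.succ - (if j.succ = Fin.last d then c' 0 else 0))
    (hceil : ⌈bp d (fun i => (c i : ℝ))⌉ = ⌈bp d (fun i => (c' i : ℝ))⌉) :
    c = c' := by
  rcases lt_trichotomy (c 0) (c' 0) with h | h | h
  · exact absurd hceil (ne_of_lt (ceil_lt d hd hd0 c c' hmid h))
  · funext i
    induction i using Fin.cases with
    | zero => exact h
    | succ j =>
      have := hmid j
      split_ifs at this <;> omega
  · exact absurd hceil.symm (ne_of_lt (ceil_lt d hd hd0 c' c (fun j => (hmid j).symm) h))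

lemma log_gt_one {H : ℝ} (hH : 3 ≤ H) : 1 < Real.log H := by
  have h1 : Real.log 3 ≤ Real.log H := Real.log_le_log (by norm_num) hH
  have h2 : 1 < Real.log 3 := by
    have he : Real.exp 1 < 3 := by
      have := Real.exp_one_lt_d9
      linarith
    have := (Real.lt_log_iff_exp_lt (by norm_num : (0:ℝ) < 3)).mpr he
    linarith
  linarith

lemma Hh_lb (A : ℝ) (hA : 1 ≤ A) (H : ℝ) (hH : 3 ≤ H) :
    (2*A) ^ (-A) ≤ H / Real.log H ^ A := by
  have hA0 : (0:ℝ) < A := by linarith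
  have h2A0 : (0:ℝ) < 2*A := by linarith
  have hH0 : (0:ℝ) < H := by linarith
  have hlog : 1 < Real.log H := log_gt_one hH
  have hy : (0:ℝ) < H ^ (1/(2*A)) := Real.rpow_pos_of_pos hH0 _
  have hlogle : Real.log H ≤ 2*A * H ^ (1/(2*A)) := by
    have h1 : Real.log (H ^ (1/(2*A))) = (1/(2*A)) * Real.log H := Real.log_rpow hH0 _
    have h2 : Real.log (H ^ (1/(2*A))) ≤ H ^ (1/(2*A)) - 1 := Real.log_le_sub_one_of_pos hy
    calc Real.log H = 2*A * ((1/(2*A)) * Real.log H) := by field_simp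
    _ = 2*A * Real.log (H ^ (1/(2*A))) := by rw [h1]
    _ ≤ 2*A * (H ^ (1/(2*A))) := by nlinarith
  have hpow : Real.log H ^ A ≤ (2*A)^A * H := by
    have hr := Real.rpow_le_rpow (by linarith : (0:ℝ) ≤ Real.log H) hlogle hA0.le
    rw [Real.mul_rpow h2A0.le hy.le] at hr
    have he : (H ^ (1/(2*A)))^A = H ^ ((1/(2*A))*A) := (Real.rpow_mul hH0.le _ _).symm
    have he2 : (1/(2*A))*A = 1/2 := by field_simp
    rw [he, he2] at hr
    have hH12 : H ^ (1/2 : ℝ) ≤ H := by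
      calc H ^ (1/2 : ℝ) ≤ H ^ (1:ℝ) :=
        Real.rpow_le_rpow_of_exponent_le (by linarith) (by norm_num)
      _ = H := Real.rpow_one H
    have hc : (0:ℝ) < (2*A)^(A:ℝ) := Real.rpow_pos_of_pos h2A0 _
    calc Real.log H ^ A ≤ (2*A)^A * H ^ (1/2:ℝ) := hr
    _ ≤ (2*A)^A * H := by nlinarith
  have hlp : (0:ℝ) < Real.log H ^ A := Real.rpow_pos_of_pos (by linarith) _
  have h1 : H / ((2*A)^A * H) ≤ H / Real.log H ^ A :=
    div_le_div_of_nonneg_left hH0.le hlp hpow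
  have h2 : H / ((2*A)^A * H) = (2*A)^(-A) := by
    rw [Real.rpow_neg h2A0.le]
    have hc : ((2*A):ℝ)^(A:ℝ) ≠ 0 := ne_of_gt (Real.rpow_pos_of_pos h2A0 _)
    field_simp
  linarith

end Stmt7

/-- For even `d` and `A ≥ 1`, with `Ĥ = H (log H)^{-A}`, the number of
coefficient vectors `c ∈ S(H)` with `0 < b⁺(c) ≤ Ĥ` is `O(Ĥ H^d)`. -/
theorem stmt_7 (d : ℕ) (hd : Even d) (hd0 : 0 < d) (A : ℝ) (hA : 1 ≤ A) :
    ∃ C : ℝ, 0 < C ∧ ∀ H : ℝ, 3 ≤ H →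
      (({c : Fin (d + 1) → ℤ |
          (∀ i, |(c i : ℝ)| ≤ H) ∧ c 0 * c (Fin.last d) ≠ 0 ∧
            0 < bplusForm d (fun i => (c i : ℝ)) ∧
            bplusForm d (fun i => (c i : ℝ)) ≤ H / (Real.log H) ^ A}).ncard : ℝ)
        ≤ C * (H / (Real.log H) ^ A) * H ^ d := by
  classical
  have hA0 : (0:ℝ) < A := by linarith
  have hpa : (0:ℝ) < (2*A)^(A:ℝ) := Real.rpow_pos_of_pos (by linarith) _
  refine ⟨(1 + (2*A)^(A:ℝ)) * 5 ^ d, by positivity, ?_⟩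
  intro H hH
  have hH0 : (0:ℝ) < H := by linarith
  set Hh : ℝ := H / Real.log H ^ A with hHh
  have hlog := Stmt7.log_gt_one hH
  have hlp : (0:ℝ) < Real.log H ^ A := Real.rpow_pos_of_pos (by linarith) _
  have hHh0 : 0 < Hh := div_pos hH0 hlp
  have hlb : (2*A) ^ (-A) ≤ Hh := Stmt7.Hh_lb A hA H hH
  set S := {c : Fin (d + 1) → ℤ |
          (∀ i, |(c i : ℝ)| ≤ H) ∧ c 0 * c (Fin.last d) ≠ 0 ∧
            0 < bplusForm d (fun i => (c i : ℝ)) ∧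
            bplusForm d (fun i => (c i : ℝ)) ≤ Hh} with hS
  set f : (Fin (d+1) → ℤ) → ℤ × (Fin d → ℤ) := fun c =>
    (⌈bplusForm d (fun i => (c i : ℝ))⌉,
     fun j => c j.succ - if j.succ = Fin.last d then c 0 else 0) with hf
  have hinj : Set.InjOn f S := by
    intro c _ c' _ hfe
    have h1 : ⌈bplusForm d (fun i => (c i:ℝ))⌉ = ⌈bplusForm d (fun i => (c' i:ℝ))⌉ :=
      congrArg Prod.fst hfe
    have h2 := fun j => congrFun (congrArg Prod.snd hfe) j
    exact Stmt7.inj_aux d hd hd0 c c' h2 h1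
  set M : ℤ := ⌈2*H⌉ with hM
  set N : ℤ := ⌈Hh⌉ with hN
  have hM0 : (0:ℤ) ≤ M := Int.ceil_nonneg (by linarith)
  have hN1 : (1:ℤ) ≤ N := Int.ceil_pos.mpr hHh0
  set T : Finset (ℤ × (Fin d → ℤ)) :=
    Finset.Icc 1 N ×ˢ Fintype.piFinset (fun _ : Fin d => Finset.Icc (-M) M) with hT
  have himg : f '' S ⊆ ↑T := by
    rintro _ ⟨c, hc, rfl⟩
    obtain ⟨hcb, -, hpos, hle⟩ := hc
    refine Finset.mem_coe.mpr (Finset.mem_product.mpr ⟨?_, ?_⟩)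
    · refine Finset.mem_Icc.mpr ⟨Int.ceil_pos.mpr hpos, ?_⟩
      exact Int.ceil_le_ceil hle
    · refine Fintype.mem_piFinset.mpr fun j => Finset.mem_Icc.mpr ?_
      have hub : ((c j.succ - if j.succ = Fin.last d then c 0 else 0 : ℤ) : ℝ) ≤ 2*H ∧
          -(2*H) ≤ ((c j.succ - if j.succ = Fin.last d then c 0 else 0 : ℤ) : ℝ) := by
        have h1 := abs_le.mp (hcb j.succ)
        have h2 := abs_le.mp (hcb 0)
        split_ifs <;> push_cast <;> constructor <;> linarith
      have hceilM : 2*H ≤ ((M : ℤ) : ℝ) := by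
        rw [hM]; exact Int.le_ceil _
      constructor
      · have : ((-M : ℤ) : ℝ) ≤ ((c j.succ - if j.succ = Fin.last d then c 0 else 0 : ℤ) : ℝ) := by
          rw [Int.cast_neg]
          linarith [hub.2]
        exact_mod_cast this
      · have : ((c j.succ - if j.succ = Fin.last d then c 0 else 0 : ℤ) : ℝ) ≤ ((M : ℤ) : ℝ) := by
          linarith [hub.1]
        exact_mod_cast this
  have hcard : (S.ncard : ℝ) ≤ (T.card : ℝ) := by
    have e1 : S.ncard = (f '' S).ncard := (Set.ncard_image_of_injOn hinj).symm
    have e2 : (f '' S).ncard ≤ T.card := by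
      rw [← Set.ncard_coe_finset]
      exact Set.ncard_le_ncard himg T.finite_toSet
    exact_mod_cast e1 ▸ e2
  have hTcard : (T.card : ℝ) = ((N : ℝ)) * ((2*(M:ℝ)+1))^d := by
    rw [hT, Finset.card_product, Fintype.card_piFinset]
    simp only [Int.card_Icc, Finset.prod_const, Finset.card_univ, Fintype.card_fin]
    have e1 : ((N + 1 - 1).toNat : ℝ) = (N : ℝ) := by
      have : ((N + 1 - 1).toNat : ℤ) = N := by omega
      exact_mod_cast this
    have e2 : ((M + 1 - -M).toNat : ℝ) = 2*(M:ℝ)+1 := by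
      have : ((M + 1 - -M).toNat : ℤ) = 2*M+1 := by omega
      exact_mod_cast this
    rw [← e1, ← e2]
    push_cast
    ring
  have hMle : 2*(M:ℝ)+1 ≤ 5*H := by
    have h1 : (M:ℝ) < 2*H + 1 := Int.ceil_lt_add_one _
    linarith
  have hNle2 : (N:ℝ) ≤ (1 + (2*A)^(A:ℝ)) * Hh := by
    have hNle : (N:ℝ) ≤ Hh + 1 := (Int.ceil_lt_add_one _).le
    have hmul : (2*A)^(A:ℝ) * ((2*A)^(-A:ℝ)) = 1 := by
      rw [← Real.rpow_add (by linarith)]; simp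
    nlinarith
  calc (S.ncard:ℝ) ≤ (T.card : ℝ) := hcard
  _ = (N : ℝ) * (2*(M:ℝ)+1)^d := hTcard
  _ ≤ ((1 + (2*A)^(A:ℝ)) * Hh) * (5*H)^d := by
      refine mul_le_mul hNle2 (pow_le_pow_left₀ (by positivity) hMle d) (by positivity) ?_
      positivity
  _ = (1 + (2*A)^(A:ℝ)) * 5^d * Hh * H^d := by rw [mul_pow]; ring
end

section
/- Let p^k be a prime power and u ∈ (ℤ/p^kℤ)^{d+1}. Suppose there exist an integer α ≥ 0 with 2α + 1 ≤ k and (x₀, s₀, t₀) ∈ ℤ_p^{e+2} such that N_K(x₀) ≡ g_u(s₀, t₀) mod p^k and p^α exactly divides the vector (∇N_K(x₀), ∇g_u(s₀,t₀)) (i.e., the minimum of the p-adic valuations of its entries equals α). Then σ_u(p^k) ≥ p^{−(α+1)(e+1)}, where σ_u(p^k) = p^{−k(e+1)} · #{ (x, s, t) ∈ (ℤ/p^kℤ)^{e+2} : N_K(x) ≡ g_u(s,t) mod p^k }. -/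
open MvPolynomial in
/-- The binary form `Σ_i u_i X^(d-i) Y^i` over `ℤ`. -/
noncomputable def binFormZ (d : ℕ) (u : Fin (d + 1) → ℤ) : MvPolynomial (Fin 2) ℤ :=
  ∑ i : Fin (d + 1), C (u i) * X 0 ^ (d - (i : ℕ)) * X 1 ^ (i : ℕ)

namespace Stmt15Aux

open MvPolynomial

variable {ι : Type*} [DecidableEq ι]

/-- single-coordinate Taylor expansion with quadratic remainder -/
lemma taylor1 (f : MvPolynomial ι ℤ) (v : ι → ℤ) (i : ι) (s : ℤ) :
    ∃ c : ℤ, eval (Function.update v i (v i + s)) f =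
      eval v f + s * eval v (pderiv i f) + s ^ 2 * c := by
  induction f using MvPolynomial.induction_on with
  | C a => exact ⟨0, by simp⟩
  | add q r hq hr =>
      obtain ⟨c, hc⟩ := hq
      obtain ⟨c', hc'⟩ := hr
      exact ⟨c + c', by simp only [map_add, hc, hc']; ring⟩
  | mul_X q j hq =>
      obtain ⟨c, hc⟩ := hq
      rcases eq_or_ne i j with rfl | hij
      · refine ⟨eval v (pderiv i q) + c * (v i + s), ?_⟩
        simp only [map_mul, eval_X, Function.update_self, hc, pderiv_mul, pderiv_X_self,
          mul_one, map_add]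
        ring
      · refine ⟨c * v j, ?_⟩
        simp only [map_mul, eval_X, Function.update_of_ne (Ne.symm hij), hc, pderiv_mul,
          pderiv_X_of_ne (Ne.symm hij), mul_zero, add_zero, map_add]
        ring

lemma eval_sub_dvd (f : MvPolynomial ι ℤ) (m : ℤ) (v w : ι → ℤ)
    (h : ∀ j, m ∣ v j - w j) : m ∣ eval v f - eval w f := by
  induction f using MvPolynomial.induction_on with
  | C a => simp
  | add q r hq hr =>
      have := dvd_add hq hr
      simpa only [map_add, add_sub_add_comm] using this
  | mul_X q j hq =>
      have key : eval v (q * X j) - eval w (q * X j)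
          = (eval v q - eval w q) * v j + eval w q * (v j - w j) := by
        simp only [map_mul, eval_X]; ring
      rw [key]
      exact dvd_add (hq.mul_right _) ((h j).mul_left _)

lemma perturb [Fintype ι] (p α : ℕ) (f : MvPolynomial ι ℤ) (v₀ : ι → ℤ)
    (hD : ∀ j, (p:ℤ)^α ∣ eval v₀ (pderiv j f))
    (hf : (p:ℤ)^(2*α+1) ∣ eval v₀ f) :
    ∀ (s : Finset ι) (v : ι → ℤ), (∀ j, (p:ℤ)^(α+1) ∣ v j - v₀ j) →
      (∀ j, j ∉ s → v j = v₀ j) → (p:ℤ)^(2*α+1) ∣ eval v f := by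
  intro s
  induction s using Finset.induction_on with
  | empty =>
      intro v _ h2
      have : v = v₀ := funext fun j => h2 j (by simp)
      rwa [this]
  | @insert a s _ ih =>
      intro v h1 h2
      set v' := Function.update v a (v₀ a) with hv'
      have hv'1 : ∀ j, (p:ℤ)^(α+1) ∣ v' j - v₀ j := by
        intro j
        rcases eq_or_ne j a with rfl | hj
        · simp [hv']
        · rw [hv', Function.update_of_ne hj]; exact h1 j
      have hv'2 : ∀ j, j ∉ s → v' j = v₀ j := by
        intro j hj
        rcases eq_or_ne j a with rfl | hj'
        · simp [hv']
        · rw [hv', Function.update_of_ne hj']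
          exact h2 j (by simp [hj, hj'])
      have hmain := ih v' hv'1 hv'2
      have hva : v = Function.update v' a (v' a + (v a - v₀ a)) := by
        funext j
        rcases eq_or_ne j a with rfl | hj
        · simp [hv']
        · simp [Function.update_of_ne hj, hv']
      obtain ⟨c, hc⟩ := taylor1 f v' a (v a - v₀ a)
      rw [hva, hc]
      refine dvd_add (dvd_add hmain ?_) ?_
      · have hda : (p:ℤ)^α ∣ eval v' (pderiv a f) := by
          have hcong := eval_sub_dvd (pderiv a f) ((p:ℤ)^(α+1)) v' v₀ hv'1
          have h1' : (p:ℤ)^α ∣ eval v' (pderiv a f) - eval v₀ (pderiv a f) :=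
            dvd_trans (pow_dvd_pow _ (Nat.le_succ α)) hcong
          simpa using dvd_add h1' (hD a)
        have hsplit : (p:ℤ)^(2*α+1) = (p:ℤ)^(α+1) * (p:ℤ)^α := by
          rw [← pow_add]; congr 1; omega
        rw [hsplit]
        exact mul_dvd_mul (h1 a) hda
      · have hsq : (p:ℤ)^(2*α+1) ∣ (v a - v₀ a)^2 := by
          calc (p:ℤ)^(2*α+1) ∣ (p:ℤ)^(2*α+2) := pow_dvd_pow _ (by omega)
          _ = ((p:ℤ)^(α+1))^2 := by rw [← pow_mul]; congr 1; omega
          _ ∣ (v a - v₀ a)^2 := pow_dvd_pow_of_dvd (h1 a) 2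
        exact hsq.mul_right c

lemma henselStep (p α m : ℕ) (hp : p.Prime) (hm : 2*α+1 ≤ m)
    (f : MvPolynomial ι ℤ) (i₀ : ι) (v : ι → ℤ)
    (hd : (p:ℤ)^α ∣ eval v (pderiv i₀ f))
    (hnd : ¬ (p:ℤ)^(α+1) ∣ eval v (pderiv i₀ f))
    (hf : (p:ℤ)^m ∣ eval v f) :
    ∃ s : ℤ, (p:ℤ)^(α+1) ∣ s ∧
      (p:ℤ)^(m+1) ∣ eval (Function.update v i₀ (v i₀ + s)) f := by
  obtain ⟨U, hU⟩ := hd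
  have hpU : ¬ (p:ℤ) ∣ U := by
    intro hdvd
    exact hnd (by rw [hU, pow_succ]; exact mul_dvd_mul_left _ hdvd)
  obtain ⟨A, hA⟩ := hf
  have hcop : IsCoprime (p:ℤ) U :=
    ((Nat.prime_iff_prime_int.mp hp).coprime_iff_not_dvd).mpr hpU
  obtain ⟨a, b, hab⟩ := hcop
  -- a * p + b * U = 1
  refine ⟨-(A*b) * (p:ℤ)^(m-α), ?_, ?_⟩
  · exact Dvd.dvd.mul_left (pow_dvd_pow _ (by omega)) _
  · obtain ⟨c, hc⟩ := taylor1 f v i₀ (-(A*b) * (p:ℤ)^(m-α))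
    rw [hc, hA, hU]
    have e1 : -(A*b) * (p:ℤ)^(m-α) * ((p:ℤ)^α * U) = -(A*b*U) * (p:ℤ)^m := by
      rw [show (p:ℤ)^m = (p:ℤ)^(m-α) * (p:ℤ)^α by rw [← pow_add]; congr 1; omega]
      ring
    rw [e1]
    have e2 : (p:ℤ)^m * A + -(A*b*U) * (p:ℤ)^m = (p:ℤ)^m * (A * (a * p)) := by
      have : A * (a * (p:ℤ)) = A * (1 - b * U) := by rw [← hab]; ring
      rw [this]; ring
    rw [e2]
    refine dvd_add ?_ ?_
    · rw [show (p:ℤ)^(m+1) = (p:ℤ)^m * (p:ℤ) by ring]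
      exact mul_dvd_mul_left _ ⟨A * a, by ring⟩
    · have hsq : (p:ℤ)^(m+1) ∣ (-(A*b) * (p:ℤ)^(m-α))^2 := by
        have : (p:ℤ)^(m+1) ∣ ((p:ℤ)^(m-α))^2 := by
          rw [← pow_mul]; exact pow_dvd_pow _ (by omega)
        calc (p:ℤ)^(m+1) ∣ ((p:ℤ)^(m-α))^2 := this
        _ ∣ (-(A*b) * (p:ℤ)^(m-α))^2 := by
            rw [mul_pow]; exact dvd_mul_left _ _
      exact hsq.mul_right c

lemma henselInd (p α : ℕ) (hp : p.Prime)
    (f : MvPolynomial ι ℤ) (i₀ : ι) (v : ι → ℤ)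
    (hd : (p:ℤ)^α ∣ eval v (pderiv i₀ f))
    (hnd : ¬ (p:ℤ)^(α+1) ∣ eval v (pderiv i₀ f))
    (hf : (p:ℤ)^(2*α+1) ∣ eval v f) :
    ∀ m, 2*α+1 ≤ m → ∃ z : ℤ, (p:ℤ)^(α+1) ∣ z - v i₀ ∧
      (p:ℤ)^m ∣ eval (Function.update v i₀ z) f := by
  intro m hm
  induction m, hm using Nat.le_induction with
  | base => exact ⟨v i₀, by simp, by simpa using hf⟩
  | succ m hm ih =>
      obtain ⟨z, hz1, hz2⟩ := ih
      set v' := Function.update v i₀ z with hv'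
      have hcong : ∀ j, (p:ℤ)^(α+1) ∣ v' j - v j := by
        intro j
        rcases eq_or_ne j i₀ with rfl | hj
        · simpa [hv'] using hz1
        · simp [hv', Function.update_of_ne hj]
      have hdcong := eval_sub_dvd (pderiv i₀ f) ((p:ℤ)^(α+1)) v' v hcong
      have hd' : (p:ℤ)^α ∣ eval v' (pderiv i₀ f) := by
        have := dvd_add (dvd_trans (pow_dvd_pow _ (Nat.le_succ α)) hdcong) hd
        simpa using this
      have hnd' : ¬ (p:ℤ)^(α+1) ∣ eval v' (pderiv i₀ f) := by
        intro hcontra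
        apply hnd
        have := dvd_sub hcontra hdcong
        simpa using this
      obtain ⟨s, hs1, hs2⟩ := henselStep p α m hp hm f i₀ v' hd' hnd' hz2
      refine ⟨z + s, ?_, ?_⟩
      · have : z + s - v i₀ = (z - v i₀) + s := by ring
        rw [this]; exact dvd_add hz1 hs1
      · have : Function.update v' i₀ (v' i₀ + s) = Function.update v i₀ (z + s) := by
          rw [hv', Function.update_idem, Function.update_self]
        rwa [this] at hs2

lemma key [Fintype ι] (p : ℕ) (hp : p.Prime) (k α : ℕ) (hk : 2*α+1 ≤ k)
    (F : MvPolynomial ι ℤ) (v₀ : ι → ℤ)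
    (hf : (p:ℤ)^k ∣ eval v₀ F)
    (hD : ∀ j, (p:ℤ)^α ∣ eval v₀ (pderiv j F))
    (i₀ : ι) (hnd : ¬ (p:ℤ)^(α+1) ∣ eval v₀ (pderiv i₀ F))
    (w : ι → ℤ) :
    ∃ ξ : ι → ℤ, (∀ j, j ≠ i₀ → ξ j = v₀ j + (p:ℤ)^(α+1) * w j) ∧
      (p:ℤ)^k ∣ eval ξ F := by
  set v : ι → ℤ := fun j => if j = i₀ then v₀ j else v₀ j + (p:ℤ)^(α+1) * w j with hv
  have h1 : ∀ j, (p:ℤ)^(α+1) ∣ v j - v₀ j := by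
    intro j
    rcases eq_or_ne j i₀ with rfl | hj
    · simp [hv]
    · simp [hv, hj]
  have h2 : (p:ℤ)^(2*α+1) ∣ eval v F :=
    perturb p α F v₀ hD (dvd_trans (pow_dvd_pow _ hk) hf) Finset.univ v h1
      (by intro j hj; exact absurd (Finset.mem_univ j) hj)
  have hdcong := eval_sub_dvd (pderiv i₀ F) ((p:ℤ)^(α+1)) v v₀ h1
  have hd' : (p:ℤ)^α ∣ eval v (pderiv i₀ F) := by
    have := dvd_add (dvd_trans (pow_dvd_pow _ (Nat.le_succ α)) hdcong) (hD i₀)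
    simpa using this
  have hnd' : ¬ (p:ℤ)^(α+1) ∣ eval v (pderiv i₀ F) := by
    intro hcontra
    apply hnd
    have := dvd_sub hcontra hdcong
    simpa using this
  obtain ⟨z, _, hz⟩ := henselInd p α hp F i₀ v hd' hnd' h2 k hk
  refine ⟨Function.update v i₀ z, ?_, hz⟩
  intro j hj
  rw [Function.update_of_ne hj]
  simp [hv, hj]

lemma pderiv_rename_ne {σ τ : Type*} [DecidableEq τ] (φ : σ → τ) (i : τ)
    (h : ∀ s, φ s ≠ i) (q : MvPolynomial σ ℤ) : pderiv i (rename φ q) = 0 := by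
  induction q using MvPolynomial.induction_on with
  | C a => simp
  | add q r hq hr => simp [hq, hr]
  | mul_X q j hq =>
      rw [map_mul, rename_X, pderiv_mul, hq, pderiv_X_of_ne (h j)]
      simp

lemma evalZMod {σ : Type*} (n : ℕ) (P : MvPolynomial σ ℤ) (x : σ → ℤ) :
    eval (fun i => ((x i : ℤ) : ZMod n)) (map (Int.castRingHom (ZMod n)) P)
      = ((eval x P : ℤ) : ZMod n) := by
  rw [eval_map]
  have h := eval₂_comp_left (Int.castRingHom (ZMod n)) (RingHom.id ℤ) x P
  rw [eval₂_id, RingHom.comp_id] at h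
  exact h.symm

end Stmt15Aux

open Stmt15Aux in
/-- Hensel-type lower bound for the local density: if
`N_K(x₀) ≡ g_u(s₀,t₀) mod p^k` with `2α+1 ≤ k` and `p^α` exactly dividing the
vector of partial derivatives `(∇N_K(x₀), ∇g_u(s₀,t₀))`, then
`σ_u(p^k) ≥ p^{-(α+1)(e+1)}`. -/
theorem stmt_15 (e : ℕ) (N : MvPolynomial (Fin e) ℤ) (hhom : N.IsHomogeneous e)
    (d : ℕ) (u : Fin (d + 1) → ℤ)
    (p : ℕ) (hp : p.Prime) (k α : ℕ) (hα : 2 * α + 1 ≤ k)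
    (x₀ : Fin e → ℤ) (s₀ t₀ : ℤ)
    (hsol : ((p : ℤ) ^ k) ∣
      (MvPolynomial.eval x₀ N - MvPolynomial.eval ![s₀, t₀] (binFormZ d u)))
    (hdvd : ∀ i : Fin e ⊕ Fin 2, (p : ℤ) ^ α ∣
      Sum.elim (fun i => MvPolynomial.eval x₀ (MvPolynomial.pderiv i N))
        (fun j => MvPolynomial.eval ![s₀, t₀] (MvPolynomial.pderiv j (binFormZ d u))) i)
    (hexact : ∃ i : Fin e ⊕ Fin 2, ¬ (p : ℤ) ^ (α + 1) ∣
      Sum.elim (fun i => MvPolynomial.eval x₀ (MvPolynomial.pderiv i N))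
        (fun j => MvPolynomial.eval ![s₀, t₀] (MvPolynomial.pderiv j (binFormZ d u))) i) :
    (p : ℝ) ^ (-(((α + 1) * (e + 1) : ℕ) : ℤ)) ≤
      (Nat.card {v : (Fin e → ZMod (p ^ k)) × ZMod (p ^ k) × ZMod (p ^ k) |
          MvPolynomial.eval v.1 (MvPolynomial.map (Int.castRingHom (ZMod (p ^ k))) N) =
            MvPolynomial.eval ![v.2.1, v.2.2]
              (MvPolynomial.map (Int.castRingHom (ZMod (p ^ k))) (binFormZ d u))} : ℝ)
        / (p : ℝ) ^ (k * (e + 1)) := by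
  classical
  open MvPolynomial in
  haveI : NeZero (p ^ k) := ⟨(pow_pos hp.pos k).ne'⟩
  set ι := (Fin e ⊕ Fin 2)
  set g := binFormZ d u with hg
  set F : MvPolynomial ι ℤ :=
    rename Sum.inl N - rename Sum.inr g with hF
  set v₀ : ι → ℤ := Sum.elim x₀ ![s₀, t₀] with hv₀
  -- evaluation of F
  have hevalF : ∀ ξ : ι → ℤ, eval ξ F =
      eval (fun i => ξ (Sum.inl i)) N - eval (fun j => ξ (Sum.inr j)) g := by
    intro ξ
    simp [hF, eval_rename, Function.comp_def]
  -- partial derivatives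
  have hpdl : ∀ i : Fin e, pderiv (Sum.inl i : ι) F = rename Sum.inl (pderiv i N) := by
    intro i
    rw [hF, map_sub, pderiv_rename Sum.inl_injective,
      pderiv_rename_ne Sum.inr (Sum.inl i) (fun s => by simp) g]
    simp
  have hpdr : ∀ j : Fin 2, pderiv (Sum.inr j : ι) F = - rename Sum.inr (pderiv j g) := by
    intro j
    rw [hF, map_sub, pderiv_rename Sum.inr_injective,
      pderiv_rename_ne Sum.inl (Sum.inr j) (fun s => by simp) N]
    simp
  have hDval : ∀ i : ι, eval v₀ (pderiv i F) =
      Sum.elim (fun i => eval x₀ (pderiv i N))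
        (fun j => - eval ![s₀, t₀] (pderiv j g)) i := by
    intro i
    rcases i with i | j
    · rw [hpdl]; simp [eval_rename, hv₀, Function.comp_def]
    · rw [hpdr]; simp [eval_rename, hv₀, Function.comp_def]
  have hfv₀ : (p:ℤ)^k ∣ eval v₀ F := by
    rw [hevalF]
    have : (fun i => v₀ (Sum.inl i)) = x₀ := rfl
    rw [this]
    have : (fun j => v₀ (Sum.inr j)) = ![s₀, t₀] := by
      funext j; fin_cases j <;> rfl
    rw [this]
    exact hsol
  have hD : ∀ i : ι, (p:ℤ)^α ∣ eval v₀ (pderiv i F) := by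
    intro i
    rw [hDval]
    rcases i with i | j
    · exact hdvd (Sum.inl i)
    · simpa using (hdvd (Sum.inr j)).neg_right
  obtain ⟨i₀, hi₀⟩ := hexact
  have hnd : ¬ (p:ℤ)^(α+1) ∣ eval v₀ (pderiv i₀ F) := by
    rw [hDval]
    rcases i₀ with i | j
    · exact hi₀
    · simpa [dvd_neg] using hi₀
  -- counting
  set r := k - (α + 1) with hr
  have hk1 : α + 1 ≤ k := by omega
  have hkeq : k = (α + 1) + r := by omega
  set W := ({j : ι // j ≠ i₀} → Fin (p ^ r)) with hW
  set S := {v : (Fin e → ZMod (p ^ k)) × ZMod (p ^ k) × ZMod (p ^ k) |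
      MvPolynomial.eval v.1 (MvPolynomial.map (Int.castRingHom (ZMod (p ^ k))) N) =
        MvPolynomial.eval ![v.2.1, v.2.2]
          (MvPolynomial.map (Int.castRingHom (ZMod (p ^ k))) (binFormZ d u))} with hS
  have hex : ∀ w : W, ∃ ξ : ι → ℤ,
      (∀ j, (h : j ≠ i₀) → ξ j = v₀ j + (p:ℤ)^(α+1) * ((w ⟨j, h⟩ : ℕ) : ℤ)) ∧
      (p:ℤ)^k ∣ eval ξ F := by
    intro w
    obtain ⟨ξ, h1, h2⟩ := key p hp k α hα F v₀ hfv₀ hD i₀ hnd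
      (fun j => if h : j = i₀ then 0 else ((w ⟨j, h⟩ : ℕ) : ℤ))
    refine ⟨ξ, ?_, h2⟩
    intro j h
    rw [h1 j h]
    simp [h]
  choose ξ hξ1 hξ2 using hex
  have hmem : ∀ w : W,
      (⟨fun i => ((ξ w (Sum.inl i) : ℤ) : ZMod (p^k)),
        ((ξ w (Sum.inr 0) : ℤ) : ZMod (p^k)),
        ((ξ w (Sum.inr 1) : ℤ) : ZMod (p^k))⟩ :
        (Fin e → ZMod (p ^ k)) × ZMod (p ^ k) × ZMod (p ^ k)) ∈ S := by
    intro w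
    rw [hS, Set.mem_setOf_eq]
    have hmat : (![((ξ w (Sum.inr 0) : ℤ) : ZMod (p^k)),
        ((ξ w (Sum.inr 1) : ℤ) : ZMod (p^k))] : Fin 2 → ZMod (p^k))
        = fun j : Fin 2 => ((ξ w (Sum.inr j) : ℤ) : ZMod (p^k)) := by
      funext j; fin_cases j <;> rfl
    show _ = MvPolynomial.eval _ (MvPolynomial.map (Int.castRingHom (ZMod (p ^ k))) g)
    rw [hmat, evalZMod, evalZMod, ← sub_eq_zero, ← Int.cast_sub,
      ZMod.intCast_zmod_eq_zero_iff_dvd]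
    have := hξ2 w
    rw [hevalF] at this
    push_cast
    exact this
  set Φ : W → S := fun w => ⟨_, hmem w⟩ with hΦ
  have hinj : Function.Injective Φ := by
    intro w w' h
    have h' := congrArg Subtype.val h
    have hcoord : ∀ j : ι, j ≠ i₀ →
        ((ξ w j : ℤ) : ZMod (p^k)) = ((ξ w' j : ℤ) : ZMod (p^k)) := by
      intro j _
      rcases j with i | jj
      · exact congrFun (congrArg Prod.fst h') i
      · fin_cases jj
        · exact congrArg (fun t => t.2.1) h'
        · exact congrArg (fun t => t.2.2) h'
    funext j
    obtain ⟨j, hj⟩ := j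
    have hc := hcoord j hj
    rw [hξ1 w j hj, hξ1 w' j hj, ← sub_eq_zero, ← Int.cast_sub,
      ZMod.intCast_zmod_eq_zero_iff_dvd] at hc
    have heq : (v₀ j + (p:ℤ)^(α+1) * ((w ⟨j, hj⟩ : ℕ) : ℤ))
        - (v₀ j + (p:ℤ)^(α+1) * ((w' ⟨j, hj⟩ : ℕ) : ℤ))
        = (p:ℤ)^(α+1) * (((w ⟨j, hj⟩ : ℕ) : ℤ) - ((w' ⟨j, hj⟩ : ℕ) : ℤ)) := by ring
    rw [heq] at hc
    have hpk : ((p^k : ℕ) : ℤ) = (p:ℤ)^(α+1) * (p:ℤ)^r := by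
      push_cast
      rw [← pow_add, ← hkeq]
    rw [hpk, mul_dvd_mul_iff_left (pow_ne_zero (α+1) (Int.natCast_ne_zero.mpr hp.ne_zero))] at hc
    have hzero : (((w ⟨j, hj⟩ : ℕ) : ℤ) - ((w' ⟨j, hj⟩ : ℕ) : ℤ)) = 0 := by
      apply Int.eq_zero_of_abs_lt_dvd hc
      have b1 : ((w ⟨j, hj⟩ : ℕ) : ℤ) < (p:ℤ)^r := by
        exact_mod_cast (w ⟨j, hj⟩).isLt
      have b2 : ((w' ⟨j, hj⟩ : ℕ) : ℤ) < (p:ℤ)^r := by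
        exact_mod_cast (w' ⟨j, hj⟩).isLt
      have b3 : (0:ℤ) ≤ ((w ⟨j, hj⟩ : ℕ) : ℤ) := Int.ofNat_nonneg _
      have b4 : (0:ℤ) ≤ ((w' ⟨j, hj⟩ : ℕ) : ℤ) := Int.ofNat_nonneg _
      rw [abs_sub_lt_iff]
      omega
    have : ((w ⟨j, hj⟩ : ℕ) : ℤ) = ((w' ⟨j, hj⟩ : ℕ) : ℤ) := by omega
    have hnat : (w ⟨j, hj⟩ : ℕ) = (w' ⟨j, hj⟩ : ℕ) := by exact_mod_cast this
    exact Fin.val_injective hnat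
  have hcardW : Nat.card W = p ^ (r * (e + 1)) := by
    rw [Nat.card_eq_fintype_card, Fintype.card_fun, Fintype.card_fin]
    have hsub : Fintype.card {j : ι // j ≠ i₀} = e + 1 := by
      rw [Fintype.card_subtype_compl (fun j => j = i₀), Fintype.card_subtype_eq]
      simp [ι]
    rw [hsub, ← pow_mul]
  have hcard : p ^ (r * (e + 1)) ≤ Nat.card S := by
    rw [← hcardW]
    exact Nat.card_le_card_of_injective Φ hinj
  -- final real arithmetic
  have hp0 : (0:ℝ) < (p:ℝ) := by exact_mod_cast hp.pos
  rw [le_div_iff₀ (by positivity)]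
  have harith : (p:ℝ) ^ (-(((α + 1) * (e + 1) : ℕ) : ℤ)) * (p:ℝ) ^ (k * (e + 1))
      = (p:ℝ) ^ (r * (e + 1)) := by
    rw [← zpow_natCast (p:ℝ) (k * (e + 1)), ← zpow_add₀ (ne_of_gt hp0),
      ← zpow_natCast (p:ℝ) (r * (e + 1))]
    congr 1
    push_cast [hr, Nat.cast_sub hk1]
    ring
  rw [harith]
  calc (p:ℝ) ^ (r * (e + 1)) = ((p ^ (r * (e + 1)) : ℕ) : ℝ) := by push_cast; ring
  _ ≤ (Nat.card S : ℝ) := by exact_mod_cast hcard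
end
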